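/- arXiv:1212.2688 — 2 statements merged into one kernel-verified Lean document; each statement's English description precedes it below -/
import Mathlib

section
/- Let K be a graph with path metric on its vertex set. The following two conditions are equivalent: (1) for each positive integer n, each edge of K is contained in only finitely many circuits of length n; (2) for each positive integer n and each pair of vertices x, y of K, the set of arcs of length n connecting x to y is finite. -/
open Set Metric Filter

namespace Stmt4Aux

variable {V : Type*} (G : SimpleGraph V)

def ArcSet (n : ℕ) (x y : V) : Set (Fin (n + 1) → V) :=
  {f : Fin (n + 1) → V |
    f 0 = x ∧ f (Fin.last n) = y ∧
    (∀ i : Fin n, f i.castSucc = f i.succ ∨ G.Adj (f i.castSucc) (f i.succ)) ∧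
    Function.Injective f}

def CircSet (n : ℕ) (u v : V) : Set (Fin (n + 1) → V) :=
  {f : Fin (n + 1) → V |
    f 0 = f (Fin.last n) ∧
    (∀ i : Fin n, f i.castSucc = f i.succ ∨ G.Adj (f i.castSucc) (f i.succ)) ∧
    Function.Injective (fun i : Fin n => f i.castSucc) ∧
    ∃ i : Fin n, (f i.castSucc = u ∧ f i.succ = v) ∨
      (f i.castSucc = v ∧ f i.succ = u)}

lemma modlt (a m : ℕ) : a % (m+2) < m + 3 :=
  Nat.lt_succ_of_lt (Nat.mod_lt _ (by omega))

lemma one_mk (m : ℕ) : (1 : Fin (m+2)) = ⟨1, by omega⟩ := by ext; simp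

lemma fcong {W : Type*} {N : ℕ} (f : Fin N → W) {a b : ℕ} (p : a < N) (q : b < N)
    (h : a = b) : f ⟨a, p⟩ = f ⟨b, q⟩ := congrArg f (Fin.ext h)

lemma stepMk {N : ℕ} {f : Fin (N+1) → V}
    (hp : ∀ i : Fin N, f i.castSucc = f i.succ ∨ G.Adj (f i.castSucc) (f i.succ))
    {a b : ℕ} (ha : a < N) (hab : a + 1 = b) (pb : b < N + 1) :
    f ⟨a, by omega⟩ = f ⟨b, pb⟩ ∨ G.Adj (f ⟨a, by omega⟩) (f ⟨b, pb⟩) := by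
  have h := hp ⟨a, ha⟩
  rcases h with h | h
  · exact Or.inl (h.trans (fcong f (by omega) pb hab))
  · refine Or.inr ?_
    rw [← fcong f (by omega : a + 1 < N + 1) pb hab]
    exact h

lemma buildCircuit {n : ℕ} (hn : 2 ≤ n) {x y : V} (α β : Fin (n+1) → V)
    (hα : α ∈ ArcSet G n x y) (hβ : β ∈ ArcSet G n x y) (hz : β 1 ∉ Set.range α) :
    ∃ L, 3 ≤ L ∧ L ≤ 2*n ∧ ∃ c ∈ CircSet G L x (α 1), c 1 = β 1 := by
  classical
  obtain ⟨hα0, hαl, hαp, hαi⟩ := hα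
  obtain ⟨hβ0, hβl, hβp, hβi⟩ := hβ
  obtain ⟨m, rfl⟩ : ∃ m, n = m + 2 := ⟨n - 2, by omega⟩
  have h1v : (1 : Fin (m+3)) = ⟨1, by omega⟩ := one_mk (m+1)
  set P : ℕ → Prop :=
    fun k => 1 ≤ k ∧ k ≤ m + 2 ∧ ∃ j : Fin (m+3), ∃ hk : k < m + 3, α j = β ⟨k, hk⟩
    with hP
  have hPex : ∃ k, P k := by
    refine ⟨m + 2, by omega, le_refl _, Fin.last (m+2), by omega, ?_⟩
    have e : β ⟨m+2, by omega⟩ = β (Fin.last (m+2)) := rfl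
    rw [e, hαl, hβl]
  obtain ⟨i, ⟨hi1, hin, jf, hilt, hj⟩, hmin⟩ :
      ∃ i, P i ∧ ∀ k, k < i → ¬ P k :=
    ⟨Nat.find hPex, Nat.find_spec hPex, fun k hk => Nat.find_min hPex hk⟩
  have hi2 : 2 ≤ i := by
    by_contra h2
    have hieq : i = 1 := by omega
    apply hz
    rw [h1v]
    refine ⟨jf, ?_⟩
    rw [hj]
    exact fcong β hilt (by omega) hieq
  have hjn : jf.1 ≤ m + 2 := by have := jf.2; omega
  have hjA : α ⟨jf.1, jf.2⟩ = β ⟨i, hilt⟩ := hj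
  have hj1 : 1 ≤ jf.1 := by
    by_contra h0
    have h0' : jf.1 = 0 := by omega
    have hx : α ⟨jf.1, jf.2⟩ = α ⟨0, by omega⟩ := fcong α _ _ h0'
    have hb : β ⟨i, hilt⟩ = β ⟨0, by omega⟩ := by
      rw [← hjA, hx]
      exact hα0.trans hβ0.symm
    have h5 := hβi hb
    have : i = 0 := by simpa [Fin.ext_iff] using h5
    omega
  refine ⟨i + jf.1, by omega, by omega, ?_⟩
  set L := i + jf.1 with hLdef
  have hLl : L ≤ 2 * (m + 2) := by omega
  set c : Fin (L+1) → V :=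
    (fun k => if hk : k.1 ≤ i then β ⟨k.1, by omega⟩ else α ⟨L - k.1, by omega⟩)
    with hcdef
  have cβ : ∀ (a : ℕ) (p : a < L+1) (ha : a ≤ i), c ⟨a, p⟩ = β ⟨a, by omega⟩ :=
    fun a p ha => dif_pos ha
  have cα : ∀ (a : ℕ) (p : a < L+1) (ha : i < a), c ⟨a, p⟩ = α ⟨L - a, by omega⟩ :=
    fun a p ha => dif_neg (show ¬ (a ≤ i) by omega)
  have e0 : c 0 = x := by
    have h6 := cβ 0 (by omega) (by omega)
    exact h6.trans hβ0
  have eL : ∀ (p : L < L + 1), c ⟨L, p⟩ = x := by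
    intro p
    have h7 := cα L p (by omega)
    exact h7.trans ((fcong α _ (by omega) (show L - L = 0 by omega)).trans hα0)
  refine ⟨c, ⟨?_, ?_, ?_, ?_⟩, ?_⟩
  · -- closed
    exact e0.trans (eL (by omega)).symm
  · -- path condition
    intro k
    have hk2 := k.2
    show c ⟨k.1, by omega⟩ = c ⟨k.1+1, by omega⟩ ∨
      G.Adj (c ⟨k.1, by omega⟩) (c ⟨k.1+1, by omega⟩)
    rcases Nat.lt_or_ge k.1 i with hki | hki
    · rw [cβ k.1 (by omega) (by omega), cβ (k.1+1) (by omega) (by omega)]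
      exact stepMk G hβp (by omega) rfl (by omega)
    rcases Nat.eq_or_lt_of_le hki with hki2 | hki2
    · -- k.1 = i
      rw [cβ k.1 (by omega) (by omega), cα (k.1+1) (by omega) (by omega)]
      have hb : β ⟨k.1, by omega⟩ = α ⟨jf.1, jf.2⟩ :=
        (fcong β _ hilt hki2.symm).trans hjA.symm
      rw [hb]
      have hstep := stepMk G hαp (a := jf.1 - 1) (b := jf.1) (by omega) (by omega) jf.2
      rcases hstep with h | h
      · exact Or.inl (h.symm.trans (fcong α _ _ (by omega)))
      · refine Or.inr ?_
        rw [← fcong α (by omega : jf.1 - 1 < m + 3) (by omega) (by omega : jf.1 - 1 = L - (k.1+1))]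
        exact h.symm
    · -- i < k.1
      rw [cα k.1 (by omega) (by omega), cα (k.1+1) (by omega) (by omega)]
      have hstep := stepMk G hαp (a := L - (k.1+1)) (b := L - k.1) (by omega) (by omega) (by omega)
      rcases hstep with h | h
      · exact Or.inl h.symm
      · exact Or.inr h.symm
  · -- injectivity
    have hcross : ∀ (s t : ℕ), s ≤ i → i < t → t < L →
        ∀ (ps : s < L+1) (pt : t < L+1), c ⟨s, ps⟩ = c ⟨t, pt⟩ → False := by
      intro s t hs ht htL ps pt hev
      rw [cβ s ps hs, cα t pt ht] at hev
      have hLt1 : 1 ≤ L - t := by omega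
      have hLtj : L - t ≤ jf.1 - 1 := by omega
      rcases Nat.eq_zero_or_pos s with hs0 | hs0
      · subst hs0
        have h1 : α ⟨L - t, by omega⟩ = α ⟨0, by omega⟩ := by
          rw [← hev]
          exact hβ0.trans hα0.symm
        have h8 := hαi h1
        have : L - t = 0 := by simpa [Fin.ext_iff] using h8
        omega
      · rcases Nat.lt_or_ge s i with hsi | hsi
        · exact hmin s hsi ⟨hs0, by omega, ⟨L - t, by omega⟩, by omega, hev.symm⟩
        · have hsi' : s = i := by omega
          have h1 : α ⟨jf.1, jf.2⟩ = α ⟨L - t, by omega⟩ := by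
            rw [hjA, ← hev]
            exact fcong β hilt (by omega) hsi'.symm
          have h9 := hαi h1
          have : jf.1 = L - t := by simpa [Fin.ext_iff] using h9
          omega
    intro a b he
    have he' : c ⟨a.1, by omega⟩ = c ⟨b.1, by omega⟩ := he
    have ha2 := a.2
    have hb2 := b.2
    ext
    rcases Nat.lt_or_ge i a.1 with hai | hai <;> rcases Nat.lt_or_ge i b.1 with hbi | hbi
    · rw [cα a.1 (by omega) hai, cα b.1 (by omega) hbi] at he'
      have h10 := hαi he'
      have : L - a.1 = L - b.1 := by simpa [Fin.ext_iff] using h10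
      omega
    · exact (hcross b.1 a.1 hbi hai (by omega) (by omega) (by omega) he'.symm).elim
    · exact (hcross a.1 b.1 hai hbi (by omega) (by omega) (by omega) he').elim
    · rw [cβ a.1 (by omega) hai, cβ b.1 (by omega) hbi] at he'
      have h11 := hβi he'
      simpa [Fin.ext_iff] using h11
  · -- witness edge
    refine ⟨⟨L-1, by omega⟩, Or.inr ⟨?_, ?_⟩⟩
    · show c ⟨L-1, by omega⟩ = α 1
      rcases Nat.lt_or_ge i (L-1) with hcase | hcase
      · rw [cα (L-1) (by omega) hcase]
        exact (fcong α (by omega) (by omega) (by omega)).trans (congrArg α h1v).symm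
      · have hj1' : jf.1 = 1 := by omega
        have hLi : L - 1 = i := by omega
        rw [cβ (L-1) (by omega) (by omega)]
        exact ((fcong β (by omega) hilt hLi).trans hjA.symm).trans
          ((fcong α _ (by omega) hj1').trans (congrArg α h1v).symm)
    · show c ⟨L-1+1, by omega⟩ = x
      have h12 := cα (L-1+1) (by omega) (by omega)
      exact h12.trans ((fcong α _ (by omega) (show L - (L-1+1) = 0 by omega)).trans hα0)
  · -- c 1 = β 1
    have e1 : (1 : Fin (L+1)) = ⟨1, by omega⟩ := by
      ext
      simp only [Fin.val_one']
      exact Nat.mod_eq_of_lt (by omega)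
    rw [e1, cβ 1 (by omega) (by omega), h1v]

lemma hard (h : ∀ n : ℕ, 0 < n → ∀ u v : V, G.Adj u v → (CircSet G n u v).Finite) :
    ∀ n : ℕ, 0 < n → ∀ x y : V, (ArcSet G n x y).Finite := by
  intro n
  induction n using Nat.strong_induction_on with
  | _ n IH =>
  intro hn x y
  rcases (show n = 1 ∨ 2 ≤ n by omega) with rfl | hn2
  · -- length 1: at most one arc
    apply Set.Subsingleton.finite
    intro f hf g hg
    obtain ⟨hf0, hfl, -, -⟩ := hf
    obtain ⟨hg0, hgl, -, -⟩ := hg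
    funext a
    rcases a with ⟨av, ha⟩
    interval_cases av
    · exact hf0.trans hg0.symm
    · exact hfl.trans hgl.symm
  · by_contra hinf
    have hA : (ArcSet G n x y).Infinite := hinf
    obtain ⟨m, rfl⟩ : ∃ m, n = m + 2 := ⟨n - 2, by omega⟩
    set A := ArcSet G (m+2) x y with hAdef
    set tail : (Fin (m+3) → V) → (Fin (m+2) → V) :=
      fun f k => f ⟨k.1 + 1, by omega⟩ with htail
    -- fibers of f ↦ f 1 are finite
    have fib : ∀ z : V, {f ∈ A | f 1 = z}.Finite := by
      intro z
      apply Set.Finite.of_finite_image (f := tail)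
      · apply Set.Finite.subset (IH (m+1) (by omega) (by omega) z y)
        rintro g ⟨f, ⟨⟨hf0, hfl, hfp, hfi⟩, hf1⟩, rfl⟩
        refine ⟨?_, ?_, ?_, ?_⟩
        · show f ⟨1, by omega⟩ = z
          rw [← hf1, one_mk (m+1)]
        · exact hfl
        · intro k
          exact hfp ⟨k.1 + 1, by omega⟩
        · intro a b he
          have h2 := hfi (a₁ := ⟨a.1+1, by omega⟩) (a₂ := ⟨b.1+1, by omega⟩) he
          have : a.1 + 1 = b.1 + 1 := by simpa [Fin.ext_iff] using h2
          ext; omega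
      · rintro f ⟨⟨hf0, -, -, -⟩, -⟩ g ⟨⟨hg0, -, -, -⟩, -⟩ he
        funext a
        rcases a with ⟨av, ha⟩
        match av, ha with
        | 0, ha => exact hf0.trans hg0.symm
        | (k+1), ha => exact congrFun he ⟨k, by omega⟩
    -- the set of second vertices is infinite
    set Z := (fun f : Fin (m+3) → V => f 1) '' A with hZdef
    have hZ : Z.Infinite := by
      by_contra hZf
      rw [Set.not_infinite] at hZf
      apply hA
      apply Set.Finite.subset (Set.Finite.biUnion hZf (fun z _ => fib z))
      intro f hf
      exact Set.mem_biUnion ⟨f, hf, rfl⟩ ⟨hf, rfl⟩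
    obtain ⟨α, hαA⟩ := hA.nonempty
    have hxz0 : G.Adj x (α 1) := by
      obtain ⟨hα0, -, hαp, hαi⟩ := hαA
      have hst := hαp ⟨0, by omega⟩
      rcases hst with h1 | h1
      · exfalso
        have := hαi h1
        simp [Fin.ext_iff] at this
      · have e0 : α (⟨0, by omega⟩ : Fin (m+2)).castSucc = x := hα0
        have e1 : α (⟨0, by omega⟩ : Fin (m+2)).succ = α 1 := by
          rw [one_mk (m+1)]; exact rfl
        rwa [e0, e1] at h1
    have hZ' : (Z \ Set.range α).Infinite := hZ.diff (Set.finite_range α)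
    apply hZ'
    apply Set.Finite.subset
      (Set.Finite.biUnion (Finset.Icc 3 (2*(m+2)) : Finset ℕ).finite_toSet
        (fun L hL => ((h L (by simp [Finset.mem_Icc] at hL; omega) x (α 1) hxz0).image
          (fun c : Fin (L+1) → V => c 1))))
    rintro z ⟨hzZ, hznr⟩
    obtain ⟨β, hβA, hβ1'⟩ := hzZ
    have hβ1 : β 1 = z := hβ1'
    have hβnr : β 1 ∉ Set.range α := by rwa [hβ1]
    obtain ⟨L, hL3, hL2n, c, hc, hc1⟩ := buildCircuit G hn2 α β hαA hβA hβnr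
    refine Set.mem_biUnion ?_ ⟨c, hc, ?_⟩
    · simp only [Finset.coe_Icc, Set.mem_Icc]; omega
    · show c 1 = z
      rw [hc1]; exact hβ1


lemma easy (h : ∀ n : ℕ, 0 < n → ∀ x y : V, (ArcSet G n x y).Finite) :
    ∀ n : ℕ, 0 < n → ∀ u v : V, G.Adj u v → (CircSet G n u v).Finite := by
  intro n hn u v huv
  match n, hn with
  | 1, _ =>
    convert Set.finite_empty
    ext f
    simp only [CircSet, Set.mem_setOf_eq, Set.mem_empty_iff_false, iff_false]
    rintro ⟨hc, -, -, i, hw⟩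
    have hi : i = 0 := Subsingleton.elim _ _
    subst hi
    have hc' : f (0 : Fin 1).castSucc = f (0 : Fin 1).succ := hc
    rcases hw with ⟨h1, h2⟩ | ⟨h1, h2⟩ <;>
      exact huv.ne (by rw [← h1, ← h2, hc'])
  | (m+2), _ => ?_
  -- main case
  have key : ∀ i : Fin (m+2),
      (CircSet G (m+2) u v ∩ {f | (f i.castSucc = u ∧ f i.succ = v) ∨
        (f i.castSucc = v ∧ f i.succ = u)}).Finite := by
    intro i
    set rot : (Fin (m+3) → V) → (Fin (m+2) → V) :=
      fun f k => f ⟨(i.1 + 1 + k.1) % (m+2), modlt _ _⟩ with hrot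
    apply Set.Finite.of_finite_image (f := rot)
    · apply Set.Finite.subset (((h (m+1) (by omega) v u).union (h (m+1) (by omega) u v)))
      rintro g ⟨f, ⟨⟨hc, hp, hinj, -⟩, hw⟩, rfl⟩
      -- cyclic step property
      have cyc : ∀ a : ℕ, (ha : a < m + 2) →
          f ⟨a, by omega⟩ = f ⟨(a+1) % (m+2), modlt _ _⟩ ∨
          G.Adj (f ⟨a, by omega⟩) (f ⟨(a+1) % (m+2), modlt _ _⟩) := by
        intro a ha
        rcases Nat.lt_or_ge (a+1) (m+2) with h1 | h1
        · have e : (a+1) % (m+2) = a+1 := Nat.mod_eq_of_lt h1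
          simp only [e]
          exact hp ⟨a, ha⟩
        · have h1' : a + 1 = m + 2 := by omega
          have e : (a+1) % (m+2) = 0 := by rw [h1', Nat.mod_self]
          simp only [e]
          have h2 := hp ⟨a, ha⟩
          have h3 : f (⟨a, ha⟩ : Fin (m+2)).succ = f ⟨0, by omega⟩ := by
            have h4 : (⟨a, ha⟩ : Fin (m+2)).succ = Fin.last (m+2) := by
              ext; simp; omega
            rw [h4, ← hc]; rfl
          rw [h3] at h2
          exact h2
      -- injectivity of f on indices < m+2, in mk form
      have hinj' : ∀ a b : ℕ, (ha : a < m+2) → (hb : b < m+2) →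
          f ⟨a, by omega⟩ = f ⟨b, by omega⟩ → a = b := by
        intro a b ha hb he
        have h5 := hinj (a₁ := ⟨a, ha⟩) (a₂ := ⟨b, hb⟩) he
        exact Fin.mk.inj_iff.mp h5
      have harc : ∀ w₁ w₂ : V, f i.castSucc = w₁ → f i.succ = w₂ →
          rot f ∈ ArcSet G (m+1) w₂ w₁ := by
        intro w₁ w₂ hw1 hw2
        refine ⟨?_, ?_, ?_, ?_⟩
        · -- rot f 0 = w₂
          show f ⟨(i.1 + 1 + 0) % (m+2), modlt _ _⟩ = w₂
          rcases Nat.lt_or_ge (i.1+1) (m+2) with h1 | h1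
          · have e : (i.1 + 1 + 0) % (m+2) = i.1 + 1 := by
              rw [Nat.add_zero]; exact Nat.mod_eq_of_lt h1
            simp only [e]
            exact hw2
          · have h1' : i.1 + 1 = m + 2 := by have := i.2; omega
            have e : (i.1 + 1 + 0) % (m+2) = 0 := by rw [Nat.add_zero, h1', Nat.mod_self]
            simp only [e]
            have h3 : f i.succ = f ⟨0, by omega⟩ := by
              have h4 : i.succ = Fin.last (m+2) := by ext; simp; omega
              rw [h4, ← hc]; rfl
            rw [← hw2, h3]
        · -- rot f last = w₁
          show f ⟨(i.1 + 1 + (m+1)) % (m+2), modlt _ _⟩ = w₁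
          have e : (i.1 + 1 + (m+1)) % (m+2) = i.1 := by
            have h6 : i.1 + 1 + (m+1) = i.1 + (m+2) := by omega
            rw [h6, Nat.add_mod_right, Nat.mod_eq_of_lt i.2]
          simp only [e]
          exact hw1
        · -- path condition
          intro k
          show f ⟨(i.1 + 1 + k.1) % (m+2), modlt _ _⟩
              = f ⟨(i.1 + 1 + (k.1+1)) % (m+2), modlt _ _⟩ ∨
            G.Adj (f ⟨(i.1 + 1 + k.1) % (m+2), modlt _ _⟩)
              (f ⟨(i.1 + 1 + (k.1+1)) % (m+2), modlt _ _⟩)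
          have step := cyc ((i.1 + 1 + k.1) % (m+2)) (Nat.mod_lt _ (by omega))
          have e2 : ((i.1 + 1 + k.1) % (m+2) + 1) % (m+2) = (i.1 + 1 + (k.1+1)) % (m+2) := by
            rw [Nat.mod_add_mod, Nat.add_assoc]
          simp only [e2] at step
          convert step using 3
        · -- injectivity of rot f
          intro a b he
          have ha := Nat.mod_lt (i.1 + 1 + a.1) (y := m+2) (by omega)
          have hb := Nat.mod_lt (i.1 + 1 + b.1) (y := m+2) (by omega)
          have h7 : (i.1 + 1 + a.1) % (m+2) = (i.1 + 1 + b.1) % (m+2) :=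
            hinj' _ _ ha hb he ▸ rfl
          have h8 : a.1 % (m+2) = b.1 % (m+2) :=
            Nat.ModEq.add_left_cancel' (i.1 + 1) h7
          have ha2 := a.2; have hb2 := b.2
          ext
          rw [Nat.mod_eq_of_lt (by omega), Nat.mod_eq_of_lt (by omega)] at h8
          exact h8
      rcases hw with ⟨h1, h2⟩ | ⟨h1, h2⟩
      · exact Or.inl (harc u v h1 h2)
      · exact Or.inr (harc v u h1 h2)
    · -- InjOn rot
      rintro f ⟨⟨hcf, -, -, -⟩, -⟩ g ⟨⟨hcg, -, -, -⟩, -⟩ he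
      have haux : ∀ b : ℕ, b < m+2 → ∀ (p : b < m+3), f ⟨b, p⟩ = g ⟨b, p⟩ := by
        intro b hb p
        have h1 := congrFun he ⟨(b + (m+2) - (i.1+1)) % (m+2), Nat.mod_lt _ (by omega)⟩
        simp only [hrot] at h1
        have hidx : (i.1 + 1 + ((b + (m+2) - (i.1+1)) % (m+2))) % (m+2) = b := by
          rw [Nat.add_mod_mod]
          have h9 : i.1 + 1 + (b + (m+2) - (i.1+1)) = b + (m+2) := by
            have := i.2; omega
          rw [h9, Nat.add_mod_right, Nat.mod_eq_of_lt hb]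
        simp only [hidx] at h1
        exact h1
      funext a
      rcases a with ⟨av, ha⟩
      rcases Nat.lt_or_ge av (m+2) with hav | hav
      · exact haux av hav ha
      · have hav2 : av = m+2 := by omega
        subst hav2
        have hf : f ⟨m+2, ha⟩ = f 0 := hcf.symm
        have hg : g ⟨m+2, ha⟩ = g 0 := hcg.symm
        rw [hf, hg]
        exact haux 0 (by omega) (by omega)
  have hsub : CircSet G (m+2) u v ⊆
      ⋃ i : Fin (m+2), (CircSet G (m+2) u v ∩ {f | (f i.castSucc = u ∧ f i.succ = v) ∨
        (f i.castSucc = v ∧ f i.succ = u)}) := by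
    intro f hf
    obtain ⟨i, hw⟩ := hf.2.2.2
    exact Set.mem_iUnion.mpr ⟨i, hf, hw⟩
  exact Set.Finite.subset (Set.finite_iUnion key) hsub

end Stmt4Aux

/-- Bowditch's characterization of fine graphs: each edge lies in only
finitely many circuits of length `n` (for every `n`) iff for all vertices
`x, y` and every `n` the set of arcs of length `n` from `x` to `y` is finite.
Paths allow consecutive vertices to be equal or adjacent; an arc is a path
with all vertices distinct; a circuit is a closed path whose first `n`
vertices are distinct. -/
theorem stmt4 {V : Type*} (G : SimpleGraph V) :
    (∀ n : ℕ, 0 < n → ∀ u v : V, G.Adj u v →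
      {f : Fin (n + 1) → V |
        f 0 = f (Fin.last n) ∧
        (∀ i : Fin n, f i.castSucc = f i.succ ∨ G.Adj (f i.castSucc) (f i.succ)) ∧
        Function.Injective (fun i : Fin n => f i.castSucc) ∧
        ∃ i : Fin n, (f i.castSucc = u ∧ f i.succ = v) ∨
          (f i.castSucc = v ∧ f i.succ = u)}.Finite) ↔
    (∀ n : ℕ, 0 < n → ∀ x y : V,
      {f : Fin (n + 1) → V |
        f 0 = x ∧ f (Fin.last n) = y ∧
        (∀ i : Fin n, f i.castSucc = f i.succ ∨ G.Adj (f i.castSucc) (f i.succ)) ∧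
        Function.Injective f}.Finite) := by
  constructor
  · exact fun h => Stmt4Aux.hard G h
  · exact fun h => Stmt4Aux.easy G h
end

section
/- Let X and Y be metric spaces, let Φ : X → Y be a K-quasi-isometry, and let (Y(p))_{p∈P} be a collection of subsets of X with the bounded penetration property. Then the collection (Φ(Y(p)))_{p∈P} of subsets of Y also has the bounded penetration property. -/
open Set Metric Filter

/-- A `K`-quasi-isometry between metric spaces. -/
def QI {X Y : Type*} [MetricSpace X] [MetricSpace Y] (K : ℝ) (Φ : X → Y) : Prop :=
  (∀ x x' : X, dist x x' / K - 1 ≤ dist (Φ x) (Φ x') ∧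
      dist (Φ x) (Φ x') ≤ K * dist x x' + K) ∧
  ∀ y : Y, ∃ x : X, dist y (Φ x) ≤ K

def nbr {X : Type*} [MetricSpace X] (r : ℝ) (A : Set X) : Set X :=
  {x | ∃ a ∈ A, dist x a ≤ r}

/-- The bounded penetration property: for every `r ≥ 0` there is `D ≥ 0`
bounding the diameter of `N_r(Y p) ∩ N_r(Y q)` for all distinct `p, q`. -/
def BddPen {X : Type*} [MetricSpace X] {P : Type*} (Y : P → Set X) : Prop :=
  ∀ r : ℝ, 0 ≤ r → ∃ D : ℝ, 0 ≤ D ∧ ∀ p q : P, p ≠ q →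
    ∀ a ∈ nbr r (Y p) ∩ nbr r (Y q), ∀ b ∈ nbr r (Y p) ∩ nbr r (Y q),
      dist a b ≤ D

/-- The bounded penetration property is preserved by quasi-isometries. -/
theorem stmt6 {X Y : Type*} [MetricSpace X] [MetricSpace Y] {P : Type*}
    (K : ℝ) (hK : 1 ≤ K) (Φ : X → Y) (hΦ : QI K Φ)
    (Ys : P → Set X) (h : BddPen Ys) :
    BddPen (fun p => Φ '' Ys p) := by
  intro r hr
  obtain ⟨hqi, -⟩ := hΦ
  have hK0 : (0:ℝ) < K := lt_of_lt_of_le one_pos hK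
  have hr'0 : 0 ≤ K * (2*r+1) := by positivity
  obtain ⟨D, hD0, hD⟩ := h (K * (2*r+1)) hr'0
  refine ⟨2*r + K*D + K, by nlinarith, ?_⟩
  rintro p q hpq a ⟨⟨-, ⟨yp, hyp, rfl⟩, hap⟩, ⟨-, ⟨yq, hyq, rfl⟩, haq⟩⟩
    b ⟨⟨-, ⟨xp, hxp, rfl⟩, hbp⟩, ⟨-, ⟨xq, hxq, rfl⟩, hbq⟩⟩
  have h1 : dist yp yq ≤ K * (2*r+1) := by
    have := (hqi yp yq).1
    have h2 : dist (Φ yp) (Φ yq) ≤ 2*r :=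
      (dist_triangle_left _ _ a).trans (by linarith)
    have hdiv : dist yp yq / K ≤ 2*r + 1 := by linarith
    calc dist yp yq = K * (dist yp yq / K) := by field_simp
    _ ≤ K * (2*r+1) := by nlinarith [dist_nonneg (x := yp) (y := yq)]
  have h1' : dist xp xq ≤ K * (2*r+1) := by
    have := (hqi xp xq).1
    have h2 : dist (Φ xp) (Φ xq) ≤ 2*r :=
      (dist_triangle_left _ _ b).trans (by linarith)
    have hdiv : dist xp xq / K ≤ 2*r + 1 := by linarith
    calc dist xp xq = K * (dist xp xq / K) := by field_simp
    _ ≤ K * (2*r+1) := by nlinarith [dist_nonneg (x := xp) (y := xq)]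
  have hyp' : yp ∈ nbr (K*(2*r+1)) (Ys p) ∩ nbr (K*(2*r+1)) (Ys q) :=
    ⟨⟨yp, hyp, by simpa using hr'0⟩, ⟨yq, hyq, h1⟩⟩
  have hxp' : xp ∈ nbr (K*(2*r+1)) (Ys p) ∩ nbr (K*(2*r+1)) (Ys q) :=
    ⟨⟨xp, hxp, by simpa using hr'0⟩, ⟨xq, hxq, h1'⟩⟩
  have hdist : dist yp xp ≤ D := hD p q hpq yp hyp' xp hxp'
  have himg : dist (Φ yp) (Φ xp) ≤ K * D + K := by
    have := (hqi yp xp).2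
    nlinarith
  calc dist a b ≤ dist a (Φ yp) + dist (Φ yp) (Φ xp) + dist (Φ xp) b :=
        dist_triangle4 _ _ _ _
  _ ≤ r + (K*D + K) + r := by
        have := dist_comm (Φ xp) b ▸ hbp
        linarith
  _ = 2*r + K*D + K := by ring
end
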